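/- Let φ : ℝ → ℝ be continuously differentiable and increasing, and suppose there exist constants c, C, R > 0 such that c|x| ≤ |φ(x)| ≤ C|x| whenever |x| ≥ R. Then for every x ∈ ℝ and every y ≠ 0, the function s ↦ ω_{φ'}(x + i s) is differentiable at s = y with derivative equal to the Poisson-type integral ∫_ℝ y/((x − t)² + y²) φ'(t) dt. -/

import Mathlib

open MeasureTheory Complex

/-- The modified logarithm `log*|1 - z/t|`. -/
noncomputable def logStar (z : ℂ) (t : ℝ) : ℝ :=
  if 1 < |t| then Real.log (‖1 - z / (t : ℂ)‖) + z.re / t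
  else Real.log (‖1 - z / (t : ℂ)‖)

/-- The potential `ω_γ(z) = ∫ log*|1 - z/t| γ(t) dt`. -/
noncomputable def pot (γ : ℝ → ℝ) (z : ℂ) : ℝ :=
  ∫ t : ℝ, logStar z t * γ t

/-!
For `t ≠ 0` we have `log*|1 - (x + is)/t| = ½ log((x - t)² + s²) - log|t| + (a term free of s)`,
so the `s`-derivative of the integrand is the Poisson kernel `s / ((x - t)² + s²)` times `φ'(t)`;
for `s` near `y ≠ 0` this is dominated by a multiple of `|φ'(t)| / (1 + t²)`, and differentiation
under the integral sign applies once that weight and the integrand itself are integrable.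
The weight is integrable because the substitution `u = φ(t)` gives
`∫ |φ'| / (1 + φ²) ≤ ∫ du / (1 + u²) < ∞`, while `1 + φ(t)² ≲ 1 + t²` by the linear growth of `φ`.
The integrand is integrable because `log|t|` is locally integrable and
`|log*|1 - z/t|| ≤ |z|² / t²` once `|t| ≥ 2|z|`.
-/

open Set Metric Filter

theorem logStar_ofReal_add_mul_I {t s : ℝ} (ht : t ≠ 0) (hs : s ≠ 0) (x : ℝ) :
    logStar (x + s * I) t =
      Real.log ((x - t) ^ 2 + s ^ 2) / 2 - Real.log t + if 1 < |t| then x / t else 0 := by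
  have ht' : (t : ℂ) ≠ 0 := ofReal_ne_zero.mpr ht
  have hnorm : ‖1 - (x + s * I) / (t : ℂ)‖ = √((x - t) ^ 2 + s ^ 2) / |t| := by
    rw [show 1 - (x + s * I) / (t : ℂ) = ((t - x : ℝ) + (-s : ℝ) * I) / (t : ℝ) by
        push_cast; field_simp; ring,
      norm_div, norm_add_mul_I, Complex.norm_real, Real.norm_eq_abs]
    ring_nf
  unfold logStar
  rw [hnorm, Real.log_div (by positivity) (abs_ne_zero.mpr ht), Real.log_sqrt (by positivity),
    Real.log_abs]
  split_ifs <;> simp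

theorem hasDerivAt_logStar_ofReal_add_mul_I {t s : ℝ} (ht : t ≠ 0) (hs : s ≠ 0) (x : ℝ) :
    HasDerivAt (fun s : ℝ => logStar (x + s * I) t) (s / ((x - t) ^ 2 + s ^ 2)) s := by
  have hformula : (fun s : ℝ => Real.log ((x - t) ^ 2 + s ^ 2) / 2 - Real.log t +
      if 1 < |t| then x / t else 0) =ᶠ[nhds s] fun s : ℝ => logStar (x + s * I) t := by
    filter_upwards [isOpen_ne.mem_nhds hs] with u hu
    exact (logStar_ofReal_add_mul_I ht hu x).symm
  refine HasDerivAt.congr_of_eventuallyEq ?_ hformula.symm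
  have := (((hasDerivAt_pow 2 s).const_add ((x - t) ^ 2)).log (by positivity)).div_const 2
  convert (this.sub_const (Real.log t)).add_const (if 1 < |t| then x / t else 0) using 1
  field_simp
  push_cast
  ring

theorem measurable_logStar (z : ℂ) : Measurable (logStar z) := by
  unfold logStar
  refine Measurable.ite (measurableSet_lt measurable_const measurable_abs) ?_ ?_ <;> fun_prop

theorem Real.locallyIntegrable_log : LocallyIntegrable Real.log := fun x =>
  ⟨Icc (x - 1) (x + 1), Icc_mem_nhds (by linarith) (by linarith),
    (intervalIntegrable_iff_integrableOn_Icc_of_le (by linarith)).mp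
      intervalIntegral.intervalIntegrable_log'⟩

theorem locallyIntegrable_logStar_ofReal_add_mul_I (x : ℝ) {y : ℝ} (hy : y ≠ 0) :
    LocallyIntegrable (logStar (x + y * I)) := by
  have hbounded : LocallyIntegrable fun t : ℝ => if 1 < |t| then x / t else 0 := by
    have hmeas : Measurable fun t : ℝ => if 1 < |t| then x / t else 0 :=
      Measurable.ite (measurableSet_lt measurable_const measurable_abs) (by fun_prop) (by fun_prop)
    refine (memLp_top_of_bound hmeas.aestronglyMeasurable |x|
      (ae_of_all _ fun t => ?_)).locallyIntegrable le_top
    split_ifs with h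
    · rw [norm_div, Real.norm_eq_abs, Real.norm_eq_abs]
      exact div_le_self (abs_nonneg x) h.le
    · simp
  have hcont : Continuous fun t : ℝ => Real.log ((x - t) ^ 2 + y ^ 2) / 2 :=
    ((continuous_const.sub continuous_id).pow 2 |>.add continuous_const |>.log
      fun t => (by positivity : (0 : ℝ) < (x - t) ^ 2 + y ^ 2).ne').div_const 2
  refine ((hcont.locallyIntegrable.sub Real.locallyIntegrable_log).add hbounded).congr ?_
  filter_upwards [Measure.ae_ne volume 0] with t ht
  exact (logStar_ofReal_add_mul_I ht hy x).symm

theorem abs_logStar_le {z : ℂ} {t : ℝ} (ht : 1 < |t|) (hzt : 2 * ‖z‖ ≤ |t|) :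
    |logStar z t| ≤ ‖z‖ ^ 2 / t ^ 2 := by
  set u : ℂ := -(z / t)
  have hu : ‖u‖ = ‖z‖ / |t| := by
    simp only [u, norm_neg, norm_div, Complex.norm_real, Real.norm_eq_abs]
  have hu_half : ‖u‖ ≤ 1 / 2 := by
    rw [hu, div_le_iff₀ (by linarith)]
    linarith
  -- `log*` is the real part of `log (1 + u) - u`, whose Taylor series starts at `u ^ 2`.
  have hlogStar : logStar z t = (log (1 + u) - u).re := by
    simp only [logStar, if_pos ht, u, sub_re, log_re, neg_re, div_ofReal_re, ← sub_eq_add_neg]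
    ring
  calc |logStar z t| ≤ ‖log (1 + u) - u‖ := hlogStar ▸ abs_re_le_norm _
    _ ≤ ‖u‖ ^ 2 * (1 - ‖u‖)⁻¹ / 2 := norm_log_one_add_sub_self_le (by linarith)
    _ ≤ ‖u‖ ^ 2 * 2 / 2 := by
        gcongr
        rw [inv_le_comm₀ (by linarith) (by norm_num)]
        linarith
    _ = ‖z‖ ^ 2 / t ^ 2 := by rw [hu, div_pow, sq_abs]; ring

theorem one_add_sq_le_mul_sq_add_sq (x : ℝ) {a : ℝ} (ha : a ≠ 0) (t : ℝ) :
    1 + t ^ 2 ≤ (2 + (1 + 2 * x ^ 2) / a ^ 2) * ((x - t) ^ 2 + a ^ 2) := by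
  have ha2 : 0 < a ^ 2 := by positivity
  have hdiv : (1 + 2 * x ^ 2) / a ^ 2 * a ^ 2 = 1 + 2 * x ^ 2 := div_mul_cancel₀ _ ha2.ne'
  nlinarith [sq_nonneg (2 * x - t), mul_nonneg (by positivity : 0 ≤ (1 + 2 * x ^ 2) / a ^ 2)
    (sq_nonneg (x - t))]

theorem abs_div_sq_add_sq_le_of_mem_ball (x : ℝ) {y s : ℝ} (hy : y ≠ 0)
    (hs : s ∈ ball y (|y| / 2)) (t : ℝ) :
    |s / ((x - t) ^ 2 + s ^ 2)| ≤
      2 * |y| * (2 + (1 + 2 * x ^ 2) / (y / 2) ^ 2) / (1 + t ^ 2) := by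
  rw [mem_ball, Real.dist_eq] at hs
  have hs_le : |s| ≤ 2 * |y| := by linarith [abs_sub_abs_le_abs_sub s y, abs_nonneg y]
  have hs_ge : (y / 2) ^ 2 ≤ s ^ 2 := by
    rw [← sq_abs s, div_pow, ← sq_abs y]
    have : |y| / 2 ≤ |s| := by linarith [abs_sub_abs_le_abs_sub y s, abs_sub_comm y s]
    nlinarith [abs_nonneg y]
  have hy2 : 0 < (x - t) ^ 2 + (y / 2) ^ 2 := by positivity
  have hs2 : 0 < (x - t) ^ 2 + s ^ 2 := by linarith
  calc |s / ((x - t) ^ 2 + s ^ 2)| = |s| / ((x - t) ^ 2 + s ^ 2) := by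
        rw [abs_div, abs_of_pos hs2]
    _ ≤ 2 * |y| / ((x - t) ^ 2 + (y / 2) ^ 2) := by gcongr
    _ ≤ _ := by
        rw [div_le_div_iff₀ hy2 (by positivity), mul_assoc (2 * |y|)]
        exact mul_le_mul_of_nonneg_left
          (one_add_sq_le_mul_sq_add_sq x (by positivity : y / 2 ≠ 0) t) (by positivity)

theorem integrable_logStar_mul (x : ℝ) {y : ℝ} (hy : y ≠ 0) {γ : ℝ → ℝ} (hγ : Continuous γ)
    (hγ_int : Integrable fun t => γ t / (1 + t ^ 2)) :
    Integrable fun t => logStar (x + y * I) t * γ t := by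
  set z : ℂ := x + y * I
  set T := max 1 (2 * ‖z‖)
  have hcompact : IntegrableOn (fun t => logStar z t * γ t) (Icc (-T) T) :=
    ((locallyIntegrable_logStar_ofReal_add_mul_I x hy).integrableOn_isCompact
      isCompact_Icc).mul_continuousOn hγ.continuousOn isCompact_Icc
  have htail : IntegrableOn (fun t => logStar z t * γ t) (Icc (-T) T)ᶜ := by
    refine (hγ_int.norm.const_mul (2 * ‖z‖ ^ 2)).integrableOn.mono'
      ((measurable_logStar z).mul hγ.measurable).aestronglyMeasurable.restrict ?_
    rw [ae_restrict_iff' measurableSet_Icc.compl]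
    refine ae_of_all _ fun t ht => ?_
    have hTt : T < |t| := not_le.mp fun h => ht (abs_le.mp h)
    have ht1 : 1 < |t| := (le_max_left _ _).trans_lt hTt
    have ht2 : 1 + t ^ 2 ≤ 2 * t ^ 2 := by nlinarith [sq_abs t]
    have hdecay : ‖z‖ ^ 2 / t ^ 2 ≤ 2 * ‖z‖ ^ 2 / (1 + t ^ 2) := by
      rw [div_le_div_iff₀ (by linarith) (by positivity)]
      nlinarith [sq_nonneg ‖z‖]
    calc ‖logStar z t * γ t‖ = |logStar z t| * |γ t| := by rw [Real.norm_eq_abs, abs_mul]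
      _ ≤ ‖z‖ ^ 2 / t ^ 2 * |γ t| :=
          mul_le_mul_of_nonneg_right (abs_logStar_le ht1 ((le_max_right _ _).trans hTt.le))
            (abs_nonneg _)
      _ ≤ 2 * ‖z‖ ^ 2 / (1 + t ^ 2) * |γ t| := by gcongr
      _ = 2 * ‖z‖ ^ 2 * ‖γ t / (1 + t ^ 2)‖ := by
          rw [Real.norm_eq_abs, abs_div, abs_of_pos (by positivity : (0 : ℝ) < 1 + t ^ 2)]
          ring
  simpa using hcompact.union htail

theorem hasDerivAt_pot_ofReal_add_mul_I {γ : ℝ → ℝ} (hγ : Continuous γ)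
    (hγ_int : Integrable fun t => γ t / (1 + t ^ 2)) (x : ℝ) {y : ℝ} (hy : y ≠ 0) :
    HasDerivAt (fun s : ℝ => pot γ (x + s * I)) (∫ t, y / ((x - t) ^ 2 + y ^ 2) * γ t) y := by
  set K := 2 * |y| * (2 + (1 + 2 * x ^ 2) / (y / 2) ^ 2)
  have hne_zero : ∀ s ∈ ball y (|y| / 2), s ≠ 0 := fun s hs h => by
    rw [h, mem_ball, dist_zero_left, Real.norm_eq_abs] at hs
    linarith [abs_pos.mpr hy]
  have hbound : ∀ t, ∀ s ∈ ball y (|y| / 2),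
      ‖s / ((x - t) ^ 2 + s ^ 2) * γ t‖ ≤ K * ‖γ t / (1 + t ^ 2)‖ := fun t s hs =>
    calc ‖s / ((x - t) ^ 2 + s ^ 2) * γ t‖ = |s / ((x - t) ^ 2 + s ^ 2)| * ‖γ t‖ := by
          rw [norm_mul, Real.norm_eq_abs]
      _ ≤ K / (1 + t ^ 2) * ‖γ t‖ :=
          mul_le_mul_of_nonneg_right (abs_div_sq_add_sq_le_of_mem_ball x hy hs t) (norm_nonneg _)
      _ = K * ‖γ t / (1 + t ^ 2)‖ := by
          rw [norm_div, Real.norm_of_nonneg (by positivity : (0 : ℝ) ≤ 1 + t ^ 2)]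
          ring
  refine (hasDerivAt_integral_of_dominated_loc_of_deriv_le
    (F := fun (s : ℝ) t => logStar (x + s * I) t * γ t) (ball_mem_nhds y (by positivity))
    (Eventually.of_forall fun s => ((measurable_logStar _).mul hγ.measurable).aestronglyMeasurable)
    (integrable_logStar_mul x hy hγ hγ_int)
    ((continuous_const.div (by fun_prop) fun t => (by positivity : (0 : ℝ) < _).ne').mul
      hγ).aestronglyMeasurable (ae_of_all _ hbound)
    (hγ_int.norm.const_mul K) ?_).2
  filter_upwards [Measure.ae_ne volume 0] with t ht s hs
  exact (hasDerivAt_logStar_ofReal_add_mul_I ht (hne_zero s hs) x).mul_const (γ t)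

theorem Monotone.exists_abs_le_add_mul_abs {f : ℝ → ℝ} (hf : Monotone f) {C R : ℝ} (hC : 0 ≤ C)
    (hbound : ∀ x, R ≤ |x| → |f x| ≤ C * |x|) : ∃ A, ∀ x, |f x| ≤ A + C * |x| := by
  refine ⟨max |f R| |f (-R)|, fun x => ?_⟩
  have hA : |f R| ≤ max |f R| |f (-R)| := le_max_left _ _
  have hA' : |f (-R)| ≤ max |f R| |f (-R)| := le_max_right _ _
  have hCx : 0 ≤ C * |x| := mul_nonneg hC (abs_nonneg x)
  rcases le_or_gt R |x| with h | h
  · linarith [hbound x h, abs_nonneg (f R)]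
  · obtain ⟨hlo, hhi⟩ := abs_lt.mp h
    rw [abs_le]
    constructor
    · linarith [hf hlo.le, neg_abs_le (f (-R))]
    · linarith [hf hhi.le, le_abs_self (f R)]

theorem integrable_deriv_div_one_add_sq {f : ℝ → ℝ} (hf : Differentiable ℝ f)
    (hinj : Function.Injective f) {A B : ℝ} (hgrowth : ∀ x, |f x| ≤ A + B * |x|) :
    Integrable fun x => deriv f x / (1 + x ^ 2) := by
  have hsubst : Integrable fun x => |deriv f x| • (1 + f x ^ 2)⁻¹ := by
    rw [← integrableOn_univ]
    exact (integrableOn_image_iff_integrableOn_abs_deriv_smul MeasurableSet.univ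
      (fun x _ => (hf x).hasDerivAt.hasDerivWithinAt) hinj.injOn _).mp
      integrable_inv_one_add_sq.integrableOn
  set K := 1 + 2 * A ^ 2 + 2 * B ^ 2
  refine (hsubst.const_mul K).mono' ((measurable_deriv f).div (by fun_prop)).aestronglyMeasurable
    (ae_of_all _ fun x => ?_)
  have hfx : 1 + f x ^ 2 ≤ K * (1 + x ^ 2) := by
    have hsq : |f x| * |f x| ≤ (A + B * |x|) * (A + B * |x|) :=
      mul_self_le_mul_self (abs_nonneg _) (hgrowth x)
    nlinarith [sq_abs (f x), sq_abs x, sq_nonneg (A - B * |x|), sq_nonneg A, sq_nonneg B,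
      mul_nonneg (sq_nonneg A) (sq_nonneg x), sq_nonneg (B * x)]
  rw [Real.norm_eq_abs, abs_div, abs_of_pos (by positivity : (0 : ℝ) < 1 + x ^ 2), smul_eq_mul,
    ← div_eq_mul_inv, mul_div_assoc', div_le_div_iff₀ (by positivity) (by positivity)]
  nlinarith [mul_le_mul_of_nonneg_left hfx (abs_nonneg (deriv f x))]

theorem stmt_2_general (φ : ℝ → ℝ) (hφ : ContDiff ℝ 1 φ) (hmono : StrictMono φ)
    (c C R : ℝ) (hC : 0 < C)
    (hbound : ∀ x : ℝ, R ≤ |x| → c * |x| ≤ |φ x| ∧ |φ x| ≤ C * |x|) :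
    ∀ (x y : ℝ), y ≠ 0 →
      HasDerivAt (fun s : ℝ => pot (deriv φ) ((x : ℂ) + (s : ℂ) * Complex.I))
        (∫ t : ℝ, y / ((x - t) ^ 2 + y ^ 2) * deriv φ t) y := by
  intro x y hy
  obtain ⟨A, hgrowth⟩ :=
    hmono.monotone.exists_abs_le_add_mul_abs hC.le fun x hx => (hbound x hx).2
  exact hasDerivAt_pot_ofReal_add_mul_I (hφ.continuous_deriv le_rfl)
    (integrable_deriv_div_one_add_sq (hφ.differentiable one_ne_zero) hmono.injective hgrowth) x hy

theorem stmt_2 (φ : ℝ → ℝ) (hφ : ContDiff ℝ 1 φ) (hmono : StrictMono φ)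
    (c C R : ℝ) (hc : 0 < c) (hC : 0 < C) (hR : 0 < R)
    (hbound : ∀ x : ℝ, R ≤ |x| → c * |x| ≤ |φ x| ∧ |φ x| ≤ C * |x|) :
    ∀ (x y : ℝ), y ≠ 0 →
      HasDerivAt (fun s : ℝ => pot (deriv φ) ((x : ℂ) + (s : ℂ) * Complex.I))
        (∫ t : ℝ, y / ((x - t) ^ 2 + y ^ 2) * deriv φ t) y :=
  stmt_2_general φ hφ hmono c C R hC hbound
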